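/- Let H ∈ (1/2,1), ρ ≥ 0, k > 0, and B : [0,∞) → ℝ continuous with B_0 = 0. Then the equation Z_t = ρ + B_t + ∫₀^t (k u^{2H−1} / Z_u) du, with Z continuous, Z_t ≥ 0 (and Z_u > 0 for a.e. u so that the integral makes sense and is finite), has at most one solution. -/

import Mathlib

open MeasureTheory Real Set

/-! McKean's argument. The difference `D = Z₁ - Z₂` of two solutions vanishes at `0` and has
increments `∫ k u^{2H-1} (1/Z₁ - 1/Z₂) du`, whose integrand is `≤ 0` wherever `D > 0`. So `D`
can never become positive, and by symmetry neither can `-D`. -/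

/-- A nonnegative continuous solution of the singular Bessel-type equation
`Z_t = ρ + B_t + ∫₀^t k u^{2H-1}/Z_u du`. -/
def IsBesselTypeSol (H ρ k : ℝ) (B Z : ℝ → ℝ) : Prop :=
  Continuous Z ∧ (∀ t : ℝ, 0 ≤ Z t) ∧
    (∀ᵐ u ∂(volume.restrict (Ioi (0:ℝ))), 0 < Z u) ∧
    (∀ t : ℝ, 0 ≤ t → IntegrableOn (fun u => k * u ^ (2*H - 1) / Z u) (Ioc 0 t)) ∧
    (∀ t : ℝ, 0 ≤ t → Z t = ρ + B t + ∫ u in Ioc (0:ℝ) t, k * u ^ (2*H - 1) / Z u)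

/-- If `D b > 0`, the last time `s ≤ b` with `D s ≤ 0` starts an interval `(s, b]` on which
`D` is positive and yet increases. -/
theorem nonpos_of_le_of_pos_on_Ioc {D : ℝ → ℝ} {a b : ℝ} (hab : a ≤ b)
    (hD : ContinuousOn D (Icc a b)) (ha : D a ≤ 0)
    (hdec : ∀ s ∈ Icc a b, (∀ u ∈ Ioc s b, 0 < D u) → D b ≤ D s) :
    D b ≤ 0 := by
  by_contra! hb
  set S := Icc a b ∩ D ⁻¹' Iic 0
  have hS_bdd : BddAbove S := ⟨b, fun u hu => hu.1.2⟩
  have hs : sSup S ∈ S :=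
    (hD.preimage_isClosed_of_isClosed isClosed_Icc isClosed_Iic).csSup_mem
      ⟨a, ⟨left_mem_Icc.2 hab, ha⟩⟩ hS_bdd
  have hpos : ∀ u ∈ Ioc (sSup S) b, 0 < D u := fun u hu => by
    by_contra! hu_nonpos
    exact hu.1.not_ge (le_csSup hS_bdd ⟨⟨hs.1.1.trans hu.1.le, hu.2⟩, hu_nonpos⟩)
  linarith [hdec _ hs.1 hpos, show D (sSup S) ≤ 0 from hs.2]

namespace IsBesselTypeSol

variable {H ρ k : ℝ} {B Z : ℝ → ℝ}

theorem apply_zero (h : IsBesselTypeSol H ρ k B Z) : Z 0 = ρ + B 0 := by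
  simpa using h.2.2.2.2 0 le_rfl

theorem sub_eq_integral (h : IsBesselTypeSol H ρ k B Z) {s t : ℝ} (hs : 0 ≤ s) (hst : s ≤ t) :
    Z t - Z s = B t - B s + ∫ u in Ioc s t, k * u ^ (2*H - 1) / Z u := by
  have hint := h.2.2.2.1 t (hs.trans hst)
  rw [h.2.2.2.2 t (hs.trans hst), h.2.2.2.2 s hs, ← Ioc_union_Ioc_eq_Ioc hs hst,
    setIntegral_union (Ioc_disjoint_Ioc_of_le le_rfl) measurableSet_Ioc
      (hint.mono_set (Ioc_subset_Ioc_right hst)) (hint.mono_set (Ioc_subset_Ioc_left hs))]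
  ring

theorem setIntegral_drift_le {ρ' : ℝ} {B' Z' : ℝ → ℝ} (hk : 0 ≤ k)
    (h : IsBesselTypeSol H ρ k B Z) (h' : IsBesselTypeSol H ρ' k B' Z') {s t : ℝ}
    (hs : 0 ≤ s) (hst : s ≤ t) (hle : ∀ u ∈ Ioc s t, Z' u ≤ Z u) :
    ∫ u in Ioc s t, k * u ^ (2*H - 1) / Z u ≤ ∫ u in Ioc s t, k * u ^ (2*H - 1) / Z' u := by
  have hsub : Ioc s t ⊆ Ioc 0 t := Ioc_subset_Ioc_left hs
  refine setIntegral_mono_ae_restrict ((h.2.2.2.1 t (hs.trans hst)).mono_set hsub)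
    ((h'.2.2.2.1 t (hs.trans hst)).mono_set hsub) ?_
  have hZ'_pos : ∀ᵐ u ∂volume.restrict (Ioc s t), 0 < Z' u :=
    ae_restrict_of_ae_restrict_of_subset (fun u hu => hs.trans_lt hu.1) h'.2.2.1
  filter_upwards [hZ'_pos, ae_restrict_mem measurableSet_Ioc] with u hZ' hu
  have hu_pow : 0 ≤ u ^ (2*H - 1) := rpow_nonneg (hs.trans hu.1.le) (2*H - 1)
  gcongr
  exact hle u hu

theorem apply_le (hk : 0 ≤ k) (h : IsBesselTypeSol H ρ k B Z) {Z' : ℝ → ℝ}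
    (h' : IsBesselTypeSol H ρ k B Z') {t : ℝ} (ht : 0 ≤ t) : Z t ≤ Z' t := by
  suffices (Z - Z') t ≤ 0 from sub_nonpos.1 this
  refine nonpos_of_le_of_pos_on_Ioc ht (h.1.sub h'.1).continuousOn
    (by simp [h.apply_zero, h'.apply_zero]) fun s hs hpos => ?_
  have hdrift := setIntegral_drift_le hk h h' hs.1 hs.2 fun u hu => (sub_pos.1 (hpos u hu)).le
  simp only [Pi.sub_apply]
  linarith [h.sub_eq_integral hs.1 hs.2, h'.sub_eq_integral hs.1 hs.2]

end IsBesselTypeSol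

theorem bessel_type_equation_uniqueness_general
    (H : ℝ) (ρ k : ℝ) (hk : 0 < k)
    (B : ℝ → ℝ)
    (Z₁ Z₂ : ℝ → ℝ)
    (h₁ : IsBesselTypeSol H ρ k B Z₁) (h₂ : IsBesselTypeSol H ρ k B Z₂) :
    ∀ t : ℝ, 0 ≤ t → Z₁ t = Z₂ t :=
  fun _ ht => (h₁.apply_le hk.le h₂ ht).antisymm (h₂.apply_le hk.le h₁ ht)

/-- McKean-type uniqueness: for `H ∈ (1/2,1)`, `ρ ≥ 0`, `k > 0` and `B` continuous with
`B_0 = 0`, the equation `Z_t = ρ + B_t + ∫₀^t k u^{2H-1}/Z_u du` has at most one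
nonnegative continuous solution. -/
theorem bessel_type_equation_uniqueness
    (H : ℝ) (hH : H ∈ Set.Ioo (1/2 : ℝ) 1) (ρ k : ℝ) (hρ : 0 ≤ ρ) (hk : 0 < k)
    (B : ℝ → ℝ) (hB : Continuous B) (hB0 : B 0 = 0)
    (Z₁ Z₂ : ℝ → ℝ)
    (h₁ : IsBesselTypeSol H ρ k B Z₁) (h₂ : IsBesselTypeSol H ρ k B Z₂) :
    ∀ t : ℝ, 0 ≤ t → Z₁ t = Z₂ t :=
  bessel_type_equation_uniqueness_general H ρ k hk B Z₁ Z₂ h₁ h₂
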